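/- arXiv:1403.1954 — 2 statements merged into one kernel-verified Lean document; each statement's English description precedes it below -/
import Mathlib

section
/- Let Ω ⊂ ℝⁿ be a bounded domain, r > 1, s = r/(r−1), let ρ₀ ∈ L^r(Ω) with ρ₀ not a.e. zero, let q ∈ L^s(Ω) with q not a.e. zero, and let 𝒫 be the set of all rearrangements of ρ₀. Suppose there is a decreasing function η : ℝ → ℝ such that η ∘ q ∈ 𝒫. Then ∫_Ω ρ q dx ≥ ∫_Ω η(q) q dx for every ρ ∈ 𝒫, and η ∘ q is the unique minimizer: any ρ ∈ 𝒫 with ∫_Ω ρ q dx = ∫_Ω η(q) q dx equals η ∘ q almost everywhere. -/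
/-!
Write `g = η ∘ q`. By Fubini in `(x, v)`,
`∫ (ρ - g) q = ∫ v, (∫_{ρ ≥ v} q - ∫_{g ≥ v} q) dv`.
For each level `v` the two superlevel sets have equal measure, and since `η` is decreasing,
`q` is strictly larger on `{ρ ≥ v} \ {g ≥ v}` than on `{g ≥ v} \ {ρ ≥ v}`; comparing both
with a threshold between these values shows that the integrand is nonnegative and vanishes only
when the superlevel sets agree a.e. If the total is zero, a.e. level has this property, and
Tonelli applied to the region between the graphs of `ρ` and `g` gives `ρ = g` a.e.
-/

open MeasureTheory Set Filter
open scoped ENNReal symmDiff Interval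

theorem Set.Iic_symmDiff_Iic {β : Type*} [LinearOrder β] (a b : β) : Iic a ∆ Iic b = Ι a b := by
  ext v
  simp only [mem_symmDiff, mem_Iic, mem_uIoc, not_le]
  tauto

theorem indicator_Iic_sub_indicator_Iic (a b v : ℝ) :
    (Iic a).indicator (1 : ℝ → ℝ) v - (Iic b).indicator 1 v
      = SignType.sign (a - b) * (Ι a b).indicator 1 v := by
  rcases lt_trichotomy a b with h | rfl | h
  · rw [sign_neg (sub_neg.2 h), uIoc_of_le h.le]
    by_cases ha : v ≤ a <;> by_cases hb : v ≤ b <;> simp [indicator_apply, ha, hb]; linarith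
  · simp
  · rw [sign_pos (sub_pos.2 h), uIoc_of_ge h.le]
    by_cases ha : v ≤ a <;> by_cases hb : v ≤ b <;> simp [indicator_apply, ha, hb]; linarith

theorem Real.volume_real_uIoc (a b : ℝ) : volume.real (Ι a b) = |b - a| := by
  rw [measureReal_def, Real.volume_uIoc, ENNReal.toReal_ofReal (abs_nonneg _)]

theorem integrable_indicator_Iic_sub_indicator_Iic (a b : ℝ) :
    Integrable (fun v => (Iic a).indicator (1 : ℝ → ℝ) v - (Iic b).indicator 1 v) := by
  simp_rw [indicator_Iic_sub_indicator_Iic]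
  exact ((integrable_indicator_iff measurableSet_uIoc).2
    (integrableOn_const (by simp [Real.volume_uIoc]))).const_mul _

theorem integral_indicator_Iic_sub_indicator_Iic (a b : ℝ) :
    ∫ v, ((Iic a).indicator (1 : ℝ → ℝ) v - (Iic b).indicator 1 v) = a - b := by
  simp_rw [indicator_Iic_sub_indicator_Iic]
  rw [integral_const_mul, integral_indicator_one measurableSet_uIoc, Real.volume_real_uIoc,
    abs_sub_comm, sign_mul_abs]

theorem integral_abs_indicator_Iic_sub_indicator_Iic (a b : ℝ) :
    ∫ v, |(Iic a).indicator (1 : ℝ → ℝ) v - (Iic b).indicator 1 v| = |a - b| := by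
  simp_rw [← abs_indicator_symmDiff, Iic_symmDiff_Iic]
  have h1 : ∀ v, |(Ι a b).indicator (1 : ℝ → ℝ) v| = (Ι a b).indicator 1 v := fun v =>
    abs_of_nonneg (indicator_nonneg (fun _ _ => zero_le_one) v)
  simp_rw [h1]
  rw [integral_indicator_one measurableSet_uIoc, Real.volume_real_uIoc, abs_sub_comm]

section LayerCake

variable {α : Type*} [MeasurableSpace α] {μ : Measure α} {f g q : α → ℝ}

theorem measurable_indicator_Iic_comp (hf : Measurable f) :
    Measurable fun p : α × ℝ => (Iic (f p.1)).indicator (1 : ℝ → ℝ) p.2 :=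
  measurable_const.indicator (s := {p : α × ℝ | p.2 ≤ f p.1})
    (measurableSet_le measurable_snd (hf.comp measurable_fst))

theorem integrable_mul_indicator_Iic_sub_indicator_Iic [SFinite μ] (hf : Measurable f)
    (hg : Measurable g) (hq : Measurable q) (hfq : Integrable (fun x => f x * q x) μ)
    (hgq : Integrable (fun x => g x * q x) μ) :
    Integrable (fun p : α × ℝ => q p.1 *
      ((Iic (f p.1)).indicator 1 p.2 - (Iic (g p.1)).indicator 1 p.2)) (μ.prod volume) := by
  have hF : Measurable fun p : α × ℝ => q p.1 *
      ((Iic (f p.1)).indicator 1 p.2 - (Iic (g p.1)).indicator 1 p.2) :=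
    (hq.comp measurable_fst).mul
      ((measurable_indicator_Iic_comp hf).sub (measurable_indicator_Iic_comp hg))
  refine (integrable_prod_iff hF.aestronglyMeasurable).2 ⟨ae_of_all _ fun x =>
    (integrable_indicator_Iic_sub_indicator_Iic (f x) (g x)).const_mul (q x), ?_⟩
  simp_rw [norm_mul, Real.norm_eq_abs, integral_const_mul,
    integral_abs_indicator_Iic_sub_indicator_Iic, ← abs_mul, mul_sub, mul_comm (q _)]
  exact (hfq.sub hgq).abs

theorem integral_mul_indicator_Iic_sub_indicator_Iic (hq : Integrable q μ) (hf : Measurable f)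
    (hg : Measurable g) (v : ℝ) :
    ∫ x, q x * ((Iic (f x)).indicator 1 v - (Iic (g x)).indicator 1 v) ∂μ
      = ∫ x in {x | v ≤ f x}, q x ∂μ - ∫ x in {x | v ≤ g x}, q x ∂μ := by
  have hA : MeasurableSet {x | v ≤ f x} := measurableSet_le measurable_const hf
  have hB : MeasurableSet {x | v ≤ g x} := measurableSet_le measurable_const hg
  rw [← integral_indicator hA, ← integral_indicator hB,
    ← integral_sub (hq.indicator hA) (hq.indicator hB)]
  congr 1 with x
  simp only [indicator_apply, mem_Iic, mem_ofPred_eq, Pi.one_apply]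
  split_ifs <;> ring

theorem integral_mul_sub_integral_mul_eq_integral_setIntegral_sub [SFinite μ] (hf : Measurable f)
    (hg : Measurable g) (hq : Measurable q) (hqi : Integrable q μ)
    (hfq : Integrable (fun x => f x * q x) μ) (hgq : Integrable (fun x => g x * q x) μ) :
    ∫ x, f x * q x ∂μ - ∫ x, g x * q x ∂μ
      = ∫ v, (∫ x in {x | v ≤ f x}, q x ∂μ - ∫ x in {x | v ≤ g x}, q x ∂μ) := by
  simp_rw [← integral_mul_indicator_Iic_sub_indicator_Iic hqi hf hg]
  rw [← integral_integral_swap (integrable_mul_indicator_Iic_sub_indicator_Iic hf hg hq hfq hgq),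
    ← integral_sub hfq hgq]
  congr 1 with x
  rw [integral_const_mul, integral_indicator_Iic_sub_indicator_Iic]
  ring

theorem integrable_setIntegral_sub_setIntegral [SFinite μ] (hf : Measurable f)
    (hg : Measurable g) (hq : Measurable q) (hqi : Integrable q μ)
    (hfq : Integrable (fun x => f x * q x) μ) (hgq : Integrable (fun x => g x * q x) μ) :
    Integrable (fun v => ∫ x in {x | v ≤ f x}, q x ∂μ - ∫ x in {x | v ≤ g x}, q x ∂μ) := by
  simp_rw [← integral_mul_indicator_Iic_sub_indicator_Iic hqi hf hg]
  exact (integrable_mul_indicator_Iic_sub_indicator_Iic hf hg hq hfq hgq).integral_prod_right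

theorem ae_eq_of_ae_setOf_le_ae_eq [SFinite μ] (hf : Measurable f) (hg : Measurable g)
    (h : ∀ᵐ v, {x | v ≤ f x} =ᵐ[μ] {x | v ≤ g x}) : f =ᵐ[μ] g := by
  -- the region between the two graphs: its `x`-slices have length `|f x - g x|`
  set D := {p : α × ℝ | p.2 ≤ f p.1} ∆ {p | p.2 ≤ g p.1}
  have hD : MeasurableSet D := (measurableSet_le measurable_snd (hf.comp measurable_fst)).symmDiff
    (measurableSet_le measurable_snd (hg.comp measurable_fst))
  have hD0 : μ.prod volume D = 0 := by
    rw [Measure.prod_apply_symm hD, lintegral_eq_zero_iff (measurable_measure_prodMk_right hD)]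
    filter_upwards [h] with v hv
    exact measure_symmDiff_eq_zero_iff.2 hv
  rw [Measure.prod_apply hD, lintegral_eq_zero_iff (measurable_measure_prodMk_left hD)] at hD0
  filter_upwards [hD0] with x hx
  have hx' : volume (Iic (f x) ∆ Iic (g x)) = 0 := hx
  rw [Iic_symmDiff_Iic, Real.volume_uIoc, ENNReal.ofReal_eq_zero, abs_nonpos_iff,
    sub_eq_zero] at hx'
  exact hx'.symm

end LayerCake

theorem exists_separating_of_forall_lt {α : Type*} {q : α → ℝ} {X Y : Set α} (hX : X.Nonempty)
    (hY : Y.Nonempty) (h : ∀ x ∈ X, ∀ y ∈ Y, q y < q x) :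
    ∃ c, (∀ y ∈ Y, q y ≤ c) ∧ (∀ x ∈ X, c ≤ q x) ∧
      ((∀ y ∈ Y, q y < c) ∨ ∀ x ∈ X, c < q x) := by
  obtain ⟨x₀, hx₀⟩ := hX
  have hbdd : BddAbove (q '' Y) := ⟨q x₀, forall_mem_image.2 fun y hy => (h x₀ hx₀ y hy).le⟩
  have hYc : ∀ y ∈ Y, q y ≤ sSup (q '' Y) := fun y hy => le_csSup hbdd (mem_image_of_mem q hy)
  have hXc : ∀ x ∈ X, sSup (q '' Y) ≤ q x := fun x hx =>
    csSup_le (hY.image q) (forall_mem_image.2 fun y hy => (h x hx y hy).le)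
  refine ⟨sSup (q '' Y), hYc, hXc, ?_⟩
  by_cases hattained : ∃ y ∈ Y, q y = sSup (q '' Y)
  · obtain ⟨y, hy, hyc⟩ := hattained
    exact Or.inr fun x hx => hyc ▸ h x hx y hy
  · push Not at hattained
    exact Or.inl fun y hy => (hYc y hy).lt_of_ne (hattained y hy)

section Separation

variable {α : Type*} [MeasurableSpace α] {μ : Measure α} {q : α → ℝ}

theorem mul_measureReal_lt_setIntegral {s : Set α} {c : ℝ} (hs : MeasurableSet s)
    (hs0 : μ s ≠ 0) (hsfin : μ s ≠ ∞) (hq : IntegrableOn q s μ) (h : ∀ x ∈ s, c < q x) :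
    c * μ.real s < ∫ x in s, q x ∂μ := by
  have hpos : 0 < ∫ x in s, (q x - c) ∂μ := by
    refine (setIntegral_pos_iff_support_of_nonneg_ae
      ((ae_restrict_iff' hs).2 (ae_of_all _ fun x hx => sub_nonneg.2 (h x hx).le))
      (hq.sub (integrableOn_const hsfin))).2 ?_
    have hsupp : (Function.support fun x => q x - c) ∩ s = s :=
      inter_eq_right.2 fun x hx => sub_ne_zero.2 (h x hx).ne'
    rwa [hsupp, pos_iff_ne_zero]
  rw [integral_sub hq (integrableOn_const hsfin), setIntegral_const, smul_eq_mul] at hpos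
  linarith

theorem setIntegral_lt_mul_measureReal {s : Set α} {c : ℝ} (hs : MeasurableSet s)
    (hs0 : μ s ≠ 0) (hsfin : μ s ≠ ∞) (hq : IntegrableOn q s μ) (h : ∀ x ∈ s, q x < c) :
    ∫ x in s, q x ∂μ < c * μ.real s := by
  have := mul_measureReal_lt_setIntegral hs hs0 hsfin hq.neg (q := fun x => -q x) (c := -c)
    fun x hx => neg_lt_neg (h x hx)
  rw [integral_neg] at this
  linarith

theorem setIntegral_lt_setIntegral_of_forall_lt {X Y : Set α} (hX : MeasurableSet X)
    (hY : MeasurableSet Y) (hXY : μ X = μ Y) (hX0 : μ X ≠ 0) (hXfin : μ X ≠ ∞)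
    (hqX : IntegrableOn q X μ) (hqY : IntegrableOn q Y μ) (h : ∀ x ∈ X, ∀ y ∈ Y, q y < q x) :
    ∫ y in Y, q y ∂μ < ∫ x in X, q x ∂μ := by
  obtain ⟨c, hYc, hXc, hlt⟩ := exists_separating_of_forall_lt
    (nonempty_of_measure_ne_zero hX0) (nonempty_of_measure_ne_zero (hXY ▸ hX0)) h
  have hreal : μ.real Y = μ.real X := by rw [measureReal_def, measureReal_def, hXY]
  rcases hlt with hYlt | hXlt
  · calc ∫ y in Y, q y ∂μ < c * μ.real Y :=
          setIntegral_lt_mul_measureReal hY (hXY ▸ hX0) (hXY ▸ hXfin) hqY hYlt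
      _ = c * μ.real X := by rw [hreal]
      _ ≤ ∫ x in X, q x ∂μ := setIntegral_ge_of_const_le_real hX hXfin hXc hqX
  · calc ∫ y in Y, q y ∂μ ≤ ∫ _ in Y, c ∂μ :=
          setIntegral_mono_on hqY (integrableOn_const (hXY ▸ hXfin)) hY hYc
      _ = c * μ.real X := by rw [setIntegral_const, smul_eq_mul, hreal, mul_comm]
      _ < ∫ x in X, q x ∂μ := mul_measureReal_lt_setIntegral hX hX0 hXfin hqX hXlt

theorem setIntegral_lt_setIntegral_or_ae_eq {A B : Set α} (hA : MeasurableSet A)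
    (hB : MeasurableSet B) (hAB : μ A = μ B) (hAfin : μ A ≠ ∞) (hqA : IntegrableOn q A μ)
    (hqB : IntegrableOn q B μ) (h : ∀ x ∈ A \ B, ∀ y ∈ B \ A, q y < q x) :
    ∫ x in B, q x ∂μ < ∫ x in A, q x ∂μ ∨ A =ᵐ[μ] B := by
  have hdiff : μ (A \ B) = μ (B \ A) := measure_sdiff_symm hA.nullMeasurableSet
    hB.nullMeasurableSet hAB (measure_ne_top_of_subset inter_subset_left hAfin)
  rcases eq_or_ne (μ (A \ B)) 0 with h0 | h0
  · exact Or.inr (ae_eq_set.2 ⟨h0, hdiff ▸ h0⟩)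
  refine Or.inl ?_
  rw [← integral_inter_add_sdiff hB hqA, ← integral_inter_add_sdiff hA hqB, inter_comm B A]
  exact add_lt_add_right (setIntegral_lt_setIntegral_of_forall_lt (hA.diff hB) (hB.diff hA) hdiff
    h0 (measure_ne_top_of_subset sdiff_subset hAfin) (hqA.mono_set sdiff_subset)
    (hqB.mono_set sdiff_subset) h) _

end Separation

section Rearrangement

variable {α : Type*} [MeasurableSpace α] {μ : Measure α} {ρ q : α → ℝ} {η : ℝ → ℝ}

theorem setIntegral_setOf_le_comp_lt_or_ae_eq [IsFiniteMeasure μ] (hη : Antitone η)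
    (hρ : Measurable ρ) (hq : Measurable q) (hqi : Integrable q μ) {v : ℝ}
    (hv : μ {x | v ≤ ρ x} = μ {x | v ≤ η (q x)}) :
    ∫ x in {x | v ≤ η (q x)}, q x ∂μ < ∫ x in {x | v ≤ ρ x}, q x ∂μ ∨
      {x | v ≤ ρ x} =ᵐ[μ] {x | v ≤ η (q x)} :=
  setIntegral_lt_setIntegral_or_ae_eq (measurableSet_le measurable_const hρ)
    (measurableSet_le measurable_const (hη.measurable.comp hq)) hv (measure_ne_top _ _)
    hqi.integrableOn hqi.integrableOn
    fun _ hx _ hy => hη.reflect_lt ((not_le.1 hx.2).trans_le hy.1)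

theorem setIntegral_setOf_le_comp_le [IsFiniteMeasure μ] (hη : Antitone η)
    (hρ : Measurable ρ) (hq : Measurable q) (hqi : Integrable q μ) {v : ℝ}
    (hv : μ {x | v ≤ ρ x} = μ {x | v ≤ η (q x)}) :
    ∫ x in {x | v ≤ η (q x)}, q x ∂μ ≤ ∫ x in {x | v ≤ ρ x}, q x ∂μ :=
  (setIntegral_setOf_le_comp_lt_or_ae_eq hη hρ hq hqi hv).elim le_of_lt
    fun h => (setIntegral_congr_set h).ge

theorem integral_comp_mul_le_integral_mul [IsFiniteMeasure μ] (hη : Antitone η)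
    (hρ : Measurable ρ) (hq : Measurable q)
    (hlevel : ∀ τ, μ {x | τ ≤ ρ x} = μ {x | τ ≤ η (q x)}) (hqi : Integrable q μ)
    (hρq : Integrable (fun x => ρ x * q x) μ) (hηq : Integrable (fun x => η (q x) * q x) μ) :
    ∫ x, η (q x) * q x ∂μ ≤ ∫ x, ρ x * q x ∂μ := by
  have hg : Measurable fun x => η (q x) := hη.measurable.comp hq
  have hdiff := integral_mul_sub_integral_mul_eq_integral_setIntegral_sub hρ hg hq hqi hρq hηq
  have hnonneg := integral_nonneg (μ := volume) fun v =>
    sub_nonneg.2 (setIntegral_setOf_le_comp_le hη hρ hq hqi (hlevel v))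
  linarith

theorem ae_eq_comp_of_integral_mul_eq [IsFiniteMeasure μ] (hη : Antitone η)
    (hρ : Measurable ρ) (hq : Measurable q)
    (hlevel : ∀ τ, μ {x | τ ≤ ρ x} = μ {x | τ ≤ η (q x)}) (hqi : Integrable q μ)
    (hρq : Integrable (fun x => ρ x * q x) μ) (hηq : Integrable (fun x => η (q x) * q x) μ)
    (heq : ∫ x, ρ x * q x ∂μ = ∫ x, η (q x) * q x ∂μ) :
    ρ =ᵐ[μ] fun x => η (q x) := by
  have hg : Measurable fun x => η (q x) := hη.measurable.comp hq
  have hdiff := integral_mul_sub_integral_mul_eq_integral_setIntegral_sub hρ hg hq hqi hρq hηq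
  have hzero : ∀ᵐ v, ∫ x in {x | v ≤ ρ x}, q x ∂μ - ∫ x in {x | v ≤ η (q x)}, q x ∂μ = 0 :=
    (integral_eq_zero_iff_of_nonneg
      (fun v => sub_nonneg.2 (setIntegral_setOf_le_comp_le hη hρ hq hqi (hlevel v)))
      (integrable_setIntegral_sub_setIntegral hρ hg hq hqi hρq hηq)).1 (by linarith)
  refine ae_eq_of_ae_setOf_le_ae_eq hρ hg ?_
  filter_upwards [hzero] with v hv
  exact (setIntegral_setOf_le_comp_lt_or_ae_eq hη hρ hq hqi (hlevel v)).resolve_left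
    fun hlt => by linarith

theorem ProbabilityTheory.identDistrib_of_measure_setOf_le_eq [IsFiniteMeasure μ] {f g : α → ℝ}
    (hf : Measurable f) (hg : Measurable g) (h : ∀ τ, μ {x | τ ≤ f x} = μ {x | τ ≤ g x}) :
    IdentDistrib f g μ μ where
  aemeasurable_fst := hf.aemeasurable
  aemeasurable_snd := hg.aemeasurable
  map_eq := Measure.ext_of_Ici _ _ fun τ => by
    rw [Measure.map_apply hf measurableSet_Ici, Measure.map_apply hg measurableSet_Ici]
    exact h τ

end Rearrangement

theorem MeasureTheory.measure_sep_eq_restrict_apply {α : Type*} [MeasurableSpace α]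
    {μ : Measure α} {s : Set α} {p : α → Prop} (hp : MeasurableSet {x | p x}) :
    μ {x ∈ s | p x} = μ.restrict s {x | p x} := by
  rw [Measure.restrict_apply hp, inter_comm]
  rfl

theorem burton_minimizer_general {n : ℕ}
    (Ω : Set (EuclideanSpace ℝ (Fin n)))
    (hΩb : Bornology.IsBounded Ω)
    (r s : ℝ) (hr : 1 < r) (hs : s = r / (r - 1))
    (ρ₀ : EuclideanSpace ℝ (Fin n) → ℝ) (hρ₀m : Measurable ρ₀)
    (hρ₀Lr : MemLp ρ₀ (ENNReal.ofReal r) (volume.restrict Ω))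
    (q : EuclideanSpace ℝ (Fin n) → ℝ) (hqm : Measurable q)
    (hqLs : MemLp q (ENNReal.ofReal s) (volume.restrict Ω))
    (η : ℝ → ℝ) (hη : ∀ s₁ s₂ : ℝ, s₁ ≤ s₂ → η s₂ ≤ η s₁)
    (hηq : ∀ τ : ℝ, volume {x ∈ Ω | τ ≤ η (q x)} = volume {x ∈ Ω | τ ≤ ρ₀ x}) :
    (∀ ρ : EuclideanSpace ℝ (Fin n) → ℝ, Measurable ρ →
      (∀ τ : ℝ, volume {x ∈ Ω | τ ≤ ρ x} = volume {x ∈ Ω | τ ≤ ρ₀ x}) →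
      (∫ x in Ω, η (q x) * q x) ≤ ∫ x in Ω, ρ x * q x) ∧
    (∀ ρ : EuclideanSpace ℝ (Fin n) → ℝ, Measurable ρ →
      (∀ τ : ℝ, volume {x ∈ Ω | τ ≤ ρ x} = volume {x ∈ Ω | τ ≤ ρ₀ x}) →
      (∫ x in Ω, ρ x * q x) = (∫ x in Ω, η (q x) * q x) →
      ρ =ᵐ[volume.restrict Ω] fun x => η (q x)) := by
  set μ := volume.restrict Ω
  have : IsFiniteMeasure μ := isFiniteMeasure_restrict.2 hΩb.measure_lt_top.ne
  have hrs : r.HolderConjugate s := (Real.holderConjugate_iff_eq_conjExponent hr).2 hs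
  have : (ENNReal.ofReal r).HolderConjugate (ENNReal.ofReal s) := hrs.ennrealOfReal
  have hqi : Integrable q μ := hqLs.integrable (ENNReal.one_le_ofReal.2 hrs.symm.lt.le)
  have hηa : Antitone η := fun a b hab => hη a b hab
  have hg : Measurable fun x => η (q x) := hηa.measurable.comp hqm
  have hlevel : ∀ ρ : EuclideanSpace ℝ (Fin n) → ℝ, Measurable ρ →
      (∀ τ : ℝ, volume {x ∈ Ω | τ ≤ ρ x} = volume {x ∈ Ω | τ ≤ ρ₀ x}) →
      ∀ τ, μ {x | τ ≤ ρ x} = μ {x | τ ≤ ρ₀ x} := fun ρ hρ h τ => by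
    rw [← measure_sep_eq_restrict_apply (measurableSet_le measurable_const hρ),
      ← measure_sep_eq_restrict_apply (measurableSet_le measurable_const hρ₀m)]
    exact h τ
  have hmul : ∀ ρ : EuclideanSpace ℝ (Fin n) → ℝ, Measurable ρ →
      (∀ τ : ℝ, volume {x ∈ Ω | τ ≤ ρ x} = volume {x ∈ Ω | τ ≤ ρ₀ x}) →
      Integrable (fun x => ρ x * q x) μ := fun ρ hρ h =>
    ((ProbabilityTheory.identDistrib_of_measure_setOf_le_eq hρ hρ₀m (hlevel ρ hρ h)).memLp_iff.2
      hρ₀Lr).integrable_mul hqLs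
  have hlevel' : ∀ ρ : EuclideanSpace ℝ (Fin n) → ℝ, Measurable ρ →
      (∀ τ : ℝ, volume {x ∈ Ω | τ ≤ ρ x} = volume {x ∈ Ω | τ ≤ ρ₀ x}) →
      ∀ τ, μ {x | τ ≤ ρ x} = μ {x | τ ≤ η (q x)} := fun ρ hρ h τ =>
    (hlevel ρ hρ h τ).trans (hlevel _ hg hηq τ).symm
  exact ⟨fun ρ hρ h => integral_comp_mul_le_integral_mul hηa hρ hqm (hlevel' ρ hρ h) hqi
      (hmul ρ hρ h) (hmul _ hg hηq),
    fun ρ hρ h heq => ae_eq_comp_of_integral_mul_eq hηa hρ hqm (hlevel' ρ hρ h) hqi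
      (hmul ρ hρ h) (hmul _ hg hηq) heq⟩

/-- Burton: if `η` is decreasing and `η ∘ q` is a rearrangement of `ρ₀`,
then `η ∘ q` is the unique minimizer of `ρ ↦ ∫_Ω ρ q` over the rearrangement class of `ρ₀`. -/
theorem burton_minimizer {n : ℕ}
    (Ω : Set (EuclideanSpace ℝ (Fin n)))
    (hΩo : IsOpen Ω) (hΩc : IsConnected Ω) (hΩb : Bornology.IsBounded Ω)
    (r s : ℝ) (hr : 1 < r) (hs : s = r / (r - 1))
    (ρ₀ : EuclideanSpace ℝ (Fin n) → ℝ) (hρ₀m : Measurable ρ₀)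
    (hρ₀Lr : MemLp ρ₀ (ENNReal.ofReal r) (volume.restrict Ω))
    (hρ₀ne : ¬ ρ₀ =ᵐ[volume.restrict Ω] 0)
    (q : EuclideanSpace ℝ (Fin n) → ℝ) (hqm : Measurable q)
    (hqLs : MemLp q (ENNReal.ofReal s) (volume.restrict Ω))
    (hqne : ¬ q =ᵐ[volume.restrict Ω] 0)
    (η : ℝ → ℝ) (hη : ∀ s₁ s₂ : ℝ, s₁ ≤ s₂ → η s₂ ≤ η s₁)
    (hηq : ∀ τ : ℝ, volume {x ∈ Ω | τ ≤ η (q x)} = volume {x ∈ Ω | τ ≤ ρ₀ x}) :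
    (∀ ρ : EuclideanSpace ℝ (Fin n) → ℝ, Measurable ρ →
      (∀ τ : ℝ, volume {x ∈ Ω | τ ≤ ρ x} = volume {x ∈ Ω | τ ≤ ρ₀ x}) →
      (∫ x in Ω, η (q x) * q x) ≤ ∫ x in Ω, ρ x * q x) ∧
    (∀ ρ : EuclideanSpace ℝ (Fin n) → ℝ, Measurable ρ →
      (∀ τ : ℝ, volume {x ∈ Ω | τ ≤ ρ x} = volume {x ∈ Ω | τ ≤ ρ₀ x}) →
      (∫ x in Ω, ρ x * q x) = (∫ x in Ω, η (q x) * q x) →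
      ρ =ᵐ[volume.restrict Ω] fun x => η (q x)) :=
  burton_minimizer_general Ω hΩb r s hr hs ρ₀ hρ₀m hρ₀Lr q hqm hqLs η hη hηq
end

section
/- Let ν ≥ 0 and let j_{ν,1} denote the smallest positive zero of J_ν. Then J_{ν+1}(t) > 0 for every t with 0 < t ≤ j_{ν,1}. -/
open MeasureTheory Set Filter

/-- Bessel function of the first kind of order `ν`, defined by its power series
(real exponents; intended for `x > 0`). -/
noncomputable def besselJ (ν x : ℝ) : ℝ :=
  ∑' k : ℕ, ((-1 : ℝ) ^ k / (Nat.factorial k * Real.Gamma (ν + k + 1))) *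
    (x / 2) ^ (2 * (k : ℝ) + ν)

/-!
Write `J_ν(x) = (x/2)^ν G_ν((x/2)^2)` with the entire function
`G_ν(y) = ∑ (-1)^k y^k / (k! Γ(ν+k+1))`. The recursion `Γ(s+1) = s Γ(s)` gives
`(ν+1) G_{ν+1}(y) + y G_{ν+1}'(y) = G_ν(y)`, which is the classical identity
`(x^{ν+1} J_{ν+1}(x))' = x^{ν+1} J_ν(x)` in the form
`d/dx [(x/2)^{2ν+2} G_{ν+1}((x/2)^2)] = (x/2)^{2ν+1} G_ν((x/2)^2)`.
As `G_ν(0) = 1/Γ(ν+1) > 0`, the intermediate value theorem keeps `G_ν((x/2)^2)` positive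
before the first zero of `J_ν`, so the mean value theorem on `[0, t]` makes
`(t/2)^{2ν+2} G_{ν+1}((t/2)^2)` positive for `0 < t ≤ j_{ν,1}`.
-/

open Real Nat

noncomputable def besselCoeff (ν : ℝ) (k : ℕ) : ℝ :=
  (-1) ^ k / (k ! * Gamma (ν + k + 1))

noncomputable def besselSeries (ν y : ℝ) : ℝ :=
  ∑' k : ℕ, besselCoeff ν k * y ^ k

-- The truncated `k - 1` only matters at `k = 0`, where the factor `k` vanishes.
noncomputable def besselSeriesDeriv (ν y : ℝ) : ℝ :=
  ∑' k : ℕ, besselCoeff ν k * (k * y ^ (k - 1))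

lemma Gamma_add_one_le_Gamma_add_nat_add_one {ν : ℝ} (hν : 0 ≤ ν) (k : ℕ) :
    Gamma (ν + 1) ≤ Gamma (ν + k + 1) := by
  induction k with
  | zero => simp
  | succ n ih =>
    have hpos : 0 < ν + n + 1 := by positivity
    rw [Nat.cast_succ, ← add_assoc, Gamma_add_one hpos.ne']
    nlinarith [Gamma_pos_of_pos hpos]

lemma abs_besselCoeff_le {ν : ℝ} (hν : 0 ≤ ν) (k : ℕ) :
    |besselCoeff ν k| ≤ (Gamma (ν + 1))⁻¹ / k ! := by
  have hΓ : 0 < Gamma (ν + 1) := Gamma_pos_of_pos (by linarith)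
  rw [besselCoeff, abs_div, abs_pow, abs_neg, abs_one, one_pow,
    abs_of_pos (by positivity), inv_div_left, one_div]
  gcongr
  exact Gamma_add_one_le_Gamma_add_nat_add_one hν k

lemma norm_besselCoeff_mul_pow_le {ν : ℝ} (hν : 0 ≤ ν) (k : ℕ) (y : ℝ) :
    ‖besselCoeff ν k * y ^ k‖ ≤ (Gamma (ν + 1))⁻¹ * (|y| ^ k / k !) := by
  rw [norm_mul, norm_pow, Real.norm_eq_abs, Real.norm_eq_abs]
  exact (mul_le_mul_of_nonneg_right (abs_besselCoeff_le hν k) (by positivity)).trans_eq (by ring)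

lemma norm_besselCoeff_mul_deriv_pow_le {ν : ℝ} (hν : 0 ≤ ν) (k : ℕ) {y R : ℝ} (hy : |y| ≤ R) :
    ‖besselCoeff ν k * (k * y ^ (k - 1))‖ ≤ (Gamma (ν + 1))⁻¹ * (k * R ^ (k - 1) / k !) := by
  rw [norm_mul, norm_mul, norm_pow, Real.norm_natCast, Real.norm_eq_abs, Real.norm_eq_abs]
  have hyR : |y| ^ (k - 1) ≤ R ^ (k - 1) := pow_le_pow_left₀ (abs_nonneg y) hy _
  refine (mul_le_mul (abs_besselCoeff_le hν k)
    (mul_le_mul_of_nonneg_left hyR k.cast_nonneg) (by positivity)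
    (by positivity)).trans_eq (by ring)

lemma summable_nat_mul_pow_sub_one_div_factorial (R : ℝ) :
    Summable fun k : ℕ => (k * R ^ (k - 1) / k ! : ℝ) := by
  rw [← summable_nat_add_iff 1]
  refine (Real.summable_pow_div_factorial R).congr fun n => ?_
  rw [factorial_succ]
  push_cast
  field_simp

lemma summable_besselCoeff_mul_pow {ν : ℝ} (hν : 0 ≤ ν) (y : ℝ) :
    Summable fun k : ℕ => besselCoeff ν k * y ^ k :=
  .of_norm_bounded ((Real.summable_pow_div_factorial |y|).mul_left _)
    (norm_besselCoeff_mul_pow_le hν · y)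

lemma summable_besselCoeff_mul_deriv_pow {ν : ℝ} (hν : 0 ≤ ν) (y : ℝ) :
    Summable fun k : ℕ => besselCoeff ν k * (k * y ^ (k - 1)) :=
  .of_norm_bounded ((summable_nat_mul_pow_sub_one_div_factorial |y|).mul_left _)
    (norm_besselCoeff_mul_deriv_pow_le hν · le_rfl)

lemma hasDerivAt_besselSeries {ν : ℝ} (hν : 0 ≤ ν) (y : ℝ) :
    HasDerivAt (besselSeries ν) (besselSeriesDeriv ν y) y := by
  have hy : y ∈ Metric.ball (0 : ℝ) (|y| + 1) := by simp
  refine hasDerivAt_tsum_of_isPreconnected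
    ((summable_nat_mul_pow_sub_one_div_factorial (|y| + 1)).mul_left (Gamma (ν + 1))⁻¹)
    Metric.isOpen_ball (convex_ball _ _).isPreconnected
    (fun k z _ => (hasDerivAt_pow k z).const_mul (besselCoeff ν k)) (fun k z hz => ?_)
    (Metric.mem_ball_self (by positivity)) (summable_besselCoeff_mul_pow hν 0) hy
  rw [Metric.mem_ball, Real.dist_eq, sub_zero] at hz
  exact norm_besselCoeff_mul_deriv_pow_le hν k hz.le

lemma continuous_besselSeries {ν : ℝ} (hν : 0 ≤ ν) : Continuous (besselSeries ν) :=
  continuous_iff_continuousAt.2 fun y => (hasDerivAt_besselSeries hν y).continuousAt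

lemma besselSeries_zero (ν : ℝ) : besselSeries ν 0 = (Gamma (ν + 1))⁻¹ := by
  rw [besselSeries, tsum_eq_single 0 fun k hk => by simp [zero_pow hk]]
  simp [besselCoeff]

lemma add_nat_add_one_mul_besselCoeff_add_one {ν : ℝ} (hν : -1 < ν) (k : ℕ) :
    (ν + k + 1) * besselCoeff (ν + 1) k = besselCoeff ν k := by
  have hpos : 0 < ν + k + 1 := by linarith [(Nat.cast_nonneg k : (0 : ℝ) ≤ k)]
  rw [besselCoeff, besselCoeff, add_right_comm ν 1, Gamma_add_one hpos.ne', mul_left_comm,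
    mul_div_assoc', mul_div_mul_left _ _ hpos.ne']

lemma add_one_mul_besselSeries_add_one_add_mul_besselSeriesDeriv {ν : ℝ} (hν : -1 < ν) (y : ℝ) :
    (ν + 1) * besselSeries (ν + 1) y + y * besselSeriesDeriv (ν + 1) y = besselSeries ν y := by
  have hν₁ : 0 ≤ ν + 1 := by linarith
  rw [besselSeries, besselSeriesDeriv, besselSeries, ← tsum_mul_left, ← tsum_mul_left,
    ← Summable.tsum_add ((summable_besselCoeff_mul_pow hν₁ y).mul_left _)
      ((summable_besselCoeff_mul_deriv_pow hν₁ y).mul_left _)]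
  refine tsum_congr fun k => ?_
  have hyk : y * (k * y ^ (k - 1)) = k * y ^ k := by
    cases k with
    | zero => simp
    | succ n => rw [Nat.add_sub_cancel, pow_succ]; ring
  rw [← add_nat_add_one_mul_besselCoeff_add_one hν k]
  linear_combination besselCoeff (ν + 1) k * hyk

lemma besselJ_eq_rpow_mul_besselSeries (ν : ℝ) {x : ℝ} (hx : 0 < x) :
    besselJ ν x = (x / 2) ^ ν * besselSeries ν ((x / 2) ^ 2) := by
  rw [besselJ, besselSeries, ← tsum_mul_left]
  refine tsum_congr fun k => ?_
  rw [show 2 * (k : ℝ) + ν = ν + ((2 * k : ℕ) : ℝ) by push_cast; ring,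
    rpow_add (by positivity), rpow_natCast, pow_mul, besselCoeff]
  ring

lemma hasDerivAt_rpow_mul_besselSeries_add_one {ν : ℝ} (hν : -1 < ν) {x : ℝ} (hx : 0 < x) :
    HasDerivAt (fun x => (x / 2) ^ (2 * ν + 2) * besselSeries (ν + 1) ((x / 2) ^ 2))
      ((x / 2) ^ (2 * ν + 1) * besselSeries ν ((x / 2) ^ 2)) x := by
  have hx₂ : 0 < x / 2 := by positivity
  have hhalf : HasDerivAt (fun z : ℝ => z / 2) (1 / 2) x := (hasDerivAt_id x).div_const 2
  have hpow : HasDerivAt (fun z : ℝ => (z / 2) ^ (2 * ν + 2))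
      ((2 * ν + 2) * (x / 2) ^ (2 * ν + 1) * (1 / 2)) x := by
    have h := (hasDerivAt_rpow_const (p := 2 * ν + 2) (Or.inl hx₂.ne')).comp x hhalf
    rwa [show 2 * ν + 2 - 1 = 2 * ν + 1 by ring] at h
  have hsq : HasDerivAt (fun z : ℝ => (z / 2) ^ 2) (x / 2) x :=
    (hhalf.pow 2).congr_deriv (by ring)
  have hseries : HasDerivAt (fun z => besselSeries (ν + 1) ((z / 2) ^ 2))
      (besselSeriesDeriv (ν + 1) ((x / 2) ^ 2) * (x / 2)) x :=
    (hasDerivAt_besselSeries (by linarith) _).comp x hsq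
  have hsplit : (x / 2) ^ (2 * ν + 2) = (x / 2) ^ (2 * ν + 1) * (x / 2) := by
    rw [← rpow_add_one hx₂.ne']
    ring_nf
  refine (hpow.mul hseries).congr_deriv ?_
  rw [← add_one_mul_besselSeries_add_one_add_mul_besselSeriesDeriv hν, hsplit]
  ring

lemma besselSeries_sq_half_pos {ν x : ℝ} (hν : 0 ≤ ν) (hx : 0 ≤ x)
    (hJ : ∀ y ∈ Ioc 0 x, besselJ ν y ≠ 0) : 0 < besselSeries ν ((x / 2) ^ 2) := by
  set g : ℝ → ℝ := fun z => besselSeries ν ((z / 2) ^ 2)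
  have hg₀ : 0 < g 0 := by
    simpa [g, besselSeries_zero] using Gamma_pos_of_pos (by linarith : 0 < ν + 1)
  by_contra! hgx
  obtain ⟨y, ⟨hy₀, hyx⟩, hgy⟩ : ∃ y ∈ Icc 0 x, g y = 0 :=
    intermediate_value_Icc' hx ((continuous_besselSeries hν).comp (by fun_prop)).continuousOn
      ⟨hgx, hg₀.le⟩
  have hy : 0 < y := hy₀.lt_of_ne (by rintro rfl; exact hg₀.ne' hgy)
  exact hJ y ⟨hy, hyx⟩ (by
    rw [besselJ_eq_rpow_mul_besselSeries ν hy, show besselSeries ν ((y / 2) ^ 2) = 0 from hgy,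
      mul_zero])

lemma besselJ_add_one_pos_of_forall_ne_zero {ν t : ℝ} (hν : 0 ≤ ν) (ht : 0 < t)
    (hJ : ∀ x ∈ Ioo 0 t, besselJ ν x ≠ 0) : 0 < besselJ (ν + 1) t := by
  set F : ℝ → ℝ := fun x => (x / 2) ^ (2 * ν + 2) * besselSeries (ν + 1) ((x / 2) ^ 2)
  have hF₀ : F 0 = 0 := by simp [F, zero_rpow (by positivity : 2 * ν + 2 ≠ 0)]
  have hFc : Continuous F :=
    ((continuous_rpow_const (by positivity)).comp (by fun_prop)).mul
      ((continuous_besselSeries (by positivity)).comp (by fun_prop))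
  obtain ⟨c, ⟨hc₀, hct⟩, hslope⟩ := exists_hasDerivAt_eq_slope F
    (fun x => (x / 2) ^ (2 * ν + 1) * besselSeries ν ((x / 2) ^ 2)) ht hFc.continuousOn
    fun x hx => hasDerivAt_rpow_mul_besselSeries_add_one (by linarith) hx.1
  have hderiv : 0 < (c / 2) ^ (2 * ν + 1) * besselSeries ν ((c / 2) ^ 2) :=
    mul_pos (rpow_pos_of_pos (by positivity) _)
      (besselSeries_sq_half_pos hν hc₀.le fun y hy => hJ y ⟨hy.1, hy.2.trans_lt hct⟩)
  rw [hslope, hF₀, sub_zero, sub_zero] at hderiv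
  have hFt : 0 < F t := (div_pos_iff_of_pos_right ht).1 hderiv
  rw [besselJ_eq_rpow_mul_besselSeries _ ht]
  exact mul_pos (rpow_pos_of_pos (by positivity) _)
    (pos_of_mul_pos_right hFt (rpow_pos_of_pos (by positivity) _).le)

/-- `J_{ν+1}(t) > 0` for `0 < t ≤ j_{ν,1}`. -/
theorem besselJ_succ_pos (ν j : ℝ) (hν : 0 ≤ ν)
    (hj : IsLeast {x : ℝ | 0 < x ∧ besselJ ν x = 0} j) :
    ∀ t : ℝ, 0 < t → t ≤ j → 0 < besselJ (ν + 1) t := by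
  intro t ht htj
  refine besselJ_add_one_pos_of_forall_ne_zero hν ht fun x hx hJx => ?_
  linarith [hj.2 ⟨hx.1, hJx⟩, hx.2]
end
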